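/- Fix a unit vector n ∈ ℝ³ and define H₊Q = 9(Q - (n⊗n)Q - Q(n⊗n) + (2/3)((n⊗n):Q)·I) + 6(n⊗n - I/3)·((n⊗n):Q) on symmetric traceless 3×3 matrices. On the orthogonal complement of Ker H₊ (with respect to the Frobenius inner product), H₊ is bijective, and its inverse is given by H₊⁻¹Q = (1/9)(Q - (n⊗n)Q - Q(n⊗n) + (2/3)((n⊗n):Q)·I) + (14/9)(n⊗n - I/3)·((n⊗n):Q). -/
import Mathlib


/-- The Frobenius pairing `A : B = Tr (A B)`. -/
noncomputable def frob (A B : Matrix (Fin 3) (Fin 3) ℝ) : ℝ := (A * B).trace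

/-- The linearized operator `H₊` around the nematic state `n⊗n - I/3`. -/
noncomputable def Hplus (n : Fin 3 → ℝ) (Q : Matrix (Fin 3) (Fin 3) ℝ) :
    Matrix (Fin 3) (Fin 3) ℝ :=
  (9 : ℝ) • (Q - Matrix.vecMulVec n n * Q - Q * Matrix.vecMulVec n n +
      ((2 / 3) * frob (Matrix.vecMulVec n n) Q) • (1 : Matrix (Fin 3) (Fin 3) ℝ)) +
    (6 * frob (Matrix.vecMulVec n n) Q) •
      (Matrix.vecMulVec n n - (3 : ℝ)⁻¹ • (1 : Matrix (Fin 3) (Fin 3) ℝ))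

/-- The claimed inverse of `H₊` on the orthogonal complement of its kernel. -/
noncomputable def Hinv (n : Fin 3 → ℝ) (Q : Matrix (Fin 3) (Fin 3) ℝ) :
    Matrix (Fin 3) (Fin 3) ℝ :=
  (9 : ℝ)⁻¹ • (Q - Matrix.vecMulVec n n * Q - Q * Matrix.vecMulVec n n +
      ((2 / 3) * frob (Matrix.vecMulVec n n) Q) • (1 : Matrix (Fin 3) (Fin 3) ℝ)) +
    ((14 / 9) * frob (Matrix.vecMulVec n n) Q) •
      (Matrix.vecMulVec n n - (3 : ℝ)⁻¹ • (1 : Matrix (Fin 3) (Fin 3) ℝ))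

/-- On the orthogonal complement (w.r.t. the Frobenius inner product) of
`Ker H₊ = {n⊗v + v⊗n : v ⊥ n}` inside symmetric traceless matrices, `H₊` is a bijection
with inverse `Hinv`. -/
theorem stmt11 (n : Fin 3 → ℝ) (hn : ∑ i : Fin 3, n i ^ 2 = 1)
    (Q : Matrix (Fin 3) (Fin 3) ℝ) (hsymm : Q.IsSymm) (htrace : Q.trace = 0)
    (horth : ∀ v : Fin 3 → ℝ, (∑ i : Fin 3, v i * n i) = 0 →
      frob Q (Matrix.vecMulVec n v + Matrix.vecMulVec v n) = 0) :
    (Hplus n Q).IsSymm ∧ (Hplus n Q).trace = 0 ∧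
    (∀ v : Fin 3 → ℝ, (∑ i : Fin 3, v i * n i) = 0 →
      frob (Hplus n Q) (Matrix.vecMulVec n v + Matrix.vecMulVec v n) = 0) ∧
    Hinv n (Hplus n Q) = Q ∧ Hplus n (Hinv n Q) = Q := by
  have hsQ : ∀ i j, Q j i = Q i j := fun i j => hsymm.apply i j
  have hn' : n 0 ^ 2 + n 1 ^ 2 + n 2 ^ 2 = 1 := by simpa [Fin.sum_univ_three] using hn
  set P := Matrix.vecMulVec n n with hPdef
  set c := frob P Q with hc
  -- Step 1: Q n = c n, entrywise
  have hcexp : c = n 0 * n 0 * Q 0 0 + n 0 * n 1 * Q 1 0 + n 0 * n 2 * Q 2 0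
      + n 1 * n 0 * Q 0 1 + n 1 * n 1 * Q 1 1 + n 1 * n 2 * Q 2 1
      + n 2 * n 0 * Q 0 2 + n 2 * n 1 * Q 1 2 + n 2 * n 2 * Q 2 2 := by
    rw [hc, hPdef]
    simp only [frob, Matrix.trace, Matrix.diag, Matrix.mul_apply, Matrix.vecMulVec_apply,
      Fin.sum_univ_three]
    ring
  have key : ∀ i : Fin 3, Q i 0 * n 0 + Q i 1 * n 1 + Q i 2 * n 2 = c * n i := by
    set v : Fin 3 → ℝ := fun i => (Q i 0 * n 0 + Q i 1 * n 1 + Q i 2 * n 2) - c * n i with hv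
    have hv0 : v 0 = (Q 0 0 * n 0 + Q 0 1 * n 1 + Q 0 2 * n 2) - c * n 0 := rfl
    have hv1 : v 1 = (Q 1 0 * n 0 + Q 1 1 * n 1 + Q 1 2 * n 2) - c * n 1 := rfl
    have hv2 : v 2 = (Q 2 0 * n 0 + Q 2 1 * n 1 + Q 2 2 * n 2) - c * n 2 := rfl
    have hvn : ∑ i : Fin 3, v i * n i = 0 := by
      simp only [Fin.sum_univ_three]
      linear_combination n 0 * hv0 + n 1 * hv1 + n 2 * hv2 - hcexp - c * hn'
    have hE := horth v hvn
    simp only [frob, Matrix.trace, Matrix.diag, Matrix.mul_apply, Matrix.add_apply,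
      Matrix.vecMulVec_apply, Fin.sum_univ_three] at hE
    have hvn' : v 0 * n 0 + v 1 * n 1 + v 2 * n 2 = 0 := by
      simpa [Fin.sum_univ_three] using hvn
    have hsq : v 0 ^ 2 + v 1 ^ 2 + v 2 ^ 2 = 0 := by
      linear_combination hE / 2 - c * hvn' + v 0 * hv0 + v 1 * hv1 + v 2 * hv2
        + (v 1 * n 0 - v 0 * n 1) / 2 * hsQ 0 1 + (v 2 * n 0 - v 0 * n 2) / 2 * hsQ 0 2
        + (v 2 * n 1 - v 1 * n 2) / 2 * hsQ 1 2
    have s0 := sq_nonneg (v 0); have s1 := sq_nonneg (v 1); have s2 := sq_nonneg (v 2)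
    have h0 : v 0 = 0 := sq_eq_zero_iff.mp (by linarith)
    have h1 : v 1 = 0 := sq_eq_zero_iff.mp (by linarith)
    have h2 : v 2 = 0 := sq_eq_zero_iff.mp (by linarith)
    have k0 : Q 0 0 * n 0 + Q 0 1 * n 1 + Q 0 2 * n 2 = c * n 0 := by linear_combination h0 - hv0
    have k1 : Q 1 0 * n 0 + Q 1 1 * n 1 + Q 1 2 * n 2 = c * n 1 := by linear_combination h1 - hv1
    have k2 : Q 2 0 * n 0 + Q 2 1 * n 1 + Q 2 2 * n 2 = c * n 2 := by linear_combination h2 - hv2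
    intro i
    fin_cases i
    · exact k0
    · exact k1
    · exact k2
  -- Step 2: basic matrix facts
  have hPt : Matrix.transpose P = P := by
    rw [hPdef]; ext i j; simp [Matrix.vecMulVec_apply]; ring
  have hPP : P * P = P := by
    rw [hPdef]; ext i j
    simp only [Matrix.mul_apply, Matrix.vecMulVec_apply, Fin.sum_univ_three]
    linear_combination (n i * n j) * hn'
  have htrP : P.trace = 1 := by
    rw [hPdef]
    simp only [Matrix.trace, Matrix.diag, Matrix.vecMulVec_apply, Fin.sum_univ_three]
    linear_combination hn'
  have hQP : Q * P = c • P := by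
    rw [hPdef]; ext i j
    simp only [Matrix.mul_apply, Matrix.smul_apply, Matrix.vecMulVec_apply,
      Fin.sum_univ_three, smul_eq_mul]
    linear_combination n j * key i
  have hPQ : P * Q = c • P := by
    rw [hPdef]; ext i j
    simp only [Matrix.mul_apply, Matrix.smul_apply, Matrix.vecMulVec_apply,
      Fin.sum_univ_three, smul_eq_mul]
    linear_combination n i * key j + n i * n 0 * hsQ j 0 + n i * n 1 * hsQ j 1
      + n i * n 2 * hsQ j 2
  have htrPQ : (P * Q).trace = c := by rw [hc]; rfl
  have hfrobP : ∀ a b d : ℝ,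
      frob P (a • Q + b • P + d • (1 : Matrix (Fin 3) (Fin 3) ℝ)) = a * c + b + d := by
    intro a b d
    simp only [frob, Matrix.mul_add, Matrix.mul_smul, Matrix.mul_one, Matrix.trace_add,
      Matrix.trace_smul, hPP, htrP, htrPQ, smul_eq_mul]
    ring
  -- Step 3: canonical forms
  have hHQ : Hplus n Q = (9 : ℝ) • Q + (-12 * c) • P + (4 * c) • (1 : Matrix (Fin 3) (Fin 3) ℝ) := by
    rw [Hplus, ← hPdef, ← hc, hPQ, hQP]
    module
  have hfrobR : frob P (Hplus n Q) = c := by rw [hHQ, hfrobP]; ring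
  have hPR : P * Hplus n Q = c • P := by
    rw [hHQ]
    simp only [Matrix.mul_add, Matrix.mul_smul, Matrix.mul_one, hPQ, hPP]
    module
  have hRP : Hplus n Q * P = c • P := by
    rw [hHQ]
    simp only [Matrix.add_mul, Matrix.smul_mul, Matrix.one_mul, hQP, hPP]
    module
  have hSQ : Hinv n Q = (9 : ℝ)⁻¹ • Q + (12 / 9 * c) • P + (-4 / 9 * c) • (1 : Matrix (Fin 3) (Fin 3) ℝ) := by
    rw [Hinv, ← hPdef, ← hc, hPQ, hQP]
    module
  have hfrobS : frob P (Hinv n Q) = c := by rw [hSQ, hfrobP]; ring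
  have hPS : P * Hinv n Q = c • P := by
    rw [hSQ]
    simp only [Matrix.mul_add, Matrix.mul_smul, Matrix.mul_one, hPQ, hPP]
    module
  have hSP : Hinv n Q * P = c • P := by
    rw [hSQ]
    simp only [Matrix.add_mul, Matrix.smul_mul, Matrix.one_mul, hQP, hPP]
    module
  refine ⟨?_, ?_, ?_, ?_, ?_⟩
  · -- symmetry
    rw [Matrix.IsSymm, hHQ]
    simp only [Matrix.transpose_add, Matrix.transpose_smul, Matrix.transpose_one, hPt, hsymm.eq]
  · -- trace
    rw [hHQ]
    simp only [Matrix.trace_add, Matrix.trace_smul, htrace, htrP, Matrix.trace_one,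
      smul_eq_mul]
    simp
    ring
  · -- orthogonality to the kernel
    intro v hv
    have hv' : v 0 * n 0 + v 1 * n 1 + v 2 * n 2 = 0 := by
      simpa [Fin.sum_univ_three] using hv
    have hQM := horth v hv
    simp only [frob, Matrix.trace, Matrix.diag, Matrix.mul_apply, Matrix.add_apply,
      Matrix.vecMulVec_apply, Fin.sum_univ_three] at hQM
    rw [hHQ]
    simp only [frob, hPdef, Matrix.trace, Matrix.diag, Matrix.mul_apply, Matrix.add_apply,
      Matrix.smul_apply, Matrix.one_apply, Matrix.vecMulVec_apply, Fin.sum_univ_three,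
      smul_eq_mul]
    norm_num [Fin.ext_iff]
    linear_combination 9 * hQM + (8 * c - 24 * c * (n 0 ^ 2 + n 1 ^ 2 + n 2 ^ 2)) * hv'
  · -- left inverse
    rw [Hinv, ← hPdef, hfrobR, hPR, hRP, hHQ]
    module
  · -- right inverse
    rw [Hplus, ← hPdef, hfrobS, hPS, hSP, hSQ]
    module
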